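/- Let T = q1⁴(q2−q1/7)p1²/(q1−q2) + q2⁴(q1−q2/7)p2²/(q2−q1) and K = (q1²p1−q2²p2)(q1²(q1−3q2)p1 + q2²(3q1−q2)p2)(q1²(3q1³−27q1²q2+33q1q2²−q2³)p1 + q2²(q1³−33q1²q2+27q1q2²−3q2³)p2)/(q1q2(q1−q2)³). Then {T,K} = 0 identically on the open set where q1,q2 ≠ 0 and q1 ≠ q2. -/

import Mathlib

/-- Canonical Poisson bracket of two functions on phase space (q1,q2,p1,p2). -/
noncomputable def pb (f g : ℝ → ℝ → ℝ → ℝ → ℝ) (q1 q2 p1 p2 : ℝ) : ℝ :=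
  (deriv (fun x => f x q2 p1 p2) q1) * (deriv (fun x => g q1 q2 x p2) p1)
  - (deriv (fun x => f q1 q2 x p2) p1) * (deriv (fun x => g x q2 p1 p2) q1)
  + (deriv (fun x => f q1 x p1 p2) q2) * (deriv (fun x => g q1 q2 p1 x) p2)
  - (deriv (fun x => f q1 q2 p1 x) p2) * (deriv (fun x => g q1 x p1 p2) q2)

noncomputable def T (q1 q2 p1 p2 : ℝ) : ℝ :=
  q1^4 * (q2 - q1/7) * p1^2 / (q1 - q2) + q2^4 * (q1 - q2/7) * p2^2 / (q2 - q1)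

noncomputable def K (q1 q2 p1 p2 : ℝ) : ℝ :=
  (q1^2*p1 - q2^2*p2)
  * (q1^2*(q1 - 3*q2)*p1 + q2^2*(3*q1 - q2)*p2)
  * (q1^2*(3*q1^3 - 27*q1^2*q2 + 33*q1*q2^2 - q2^3)*p1
     + q2^2*(q1^3 - 33*q1^2*q2 + 27*q1*q2^2 - 3*q2^3)*p2)
  / (q1*q2*(q1 - q2)^3)

set_option maxHeartbeats 2000000 in
set_option maxHeartbeats 2000000 in
set_option maxHeartbeats 2000000 in
theorem stmt15 (q1 q2 p1 p2 : ℝ) (h1 : q1 ≠ 0) (h2 : q2 ≠ 0) (h3 : q1 ≠ q2) :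
    pb T K q1 q2 p1 p2 = 0 := by
  have hq12 : q1 - q2 ≠ 0 := sub_ne_zero.mpr h3
  have hq21 : q2 - q1 ≠ 0 := sub_ne_zero.mpr (Ne.symm h3)
  have hKden : q1 * q2 * (q1 - q2)^3 ≠ 0 :=
    mul_ne_zero (mul_ne_zero h1 h2) (pow_ne_zero 3 hq12)
  have hTq1 : HasDerivAt (fun x : ℝ => x ^ 4 * (q2 - x / 7) * p1 ^ 2 / (x - q2) + q2 ^ 4 * (x - q2 / 7) * p2 ^ 2 / (q2 - x))
      (((-4/7 : ℝ)*q1^5*p1^2 + (26/7 : ℝ)*q1^4*q2*p1^2 - 4*q1^3*q2^2*p1^2 + (6/7 : ℝ)*q2^5*p2^2) / ((q1 - q2)^2)) q1 := by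
    have h := (((((hasDerivAt_pow 4 q1).mul (((hasDerivAt_id' (x := q1)).div_const 7).const_sub q2)).mul_const (p1^2)).div ((hasDerivAt_id' (x := q1)).sub_const q2) hq12).add (((((hasDerivAt_id' (x := q1)).sub_const (q2/7)).const_mul (q2^4)).mul_const (p2^2)).div ((hasDerivAt_id' (x := q1)).const_sub q2) hq21))
    refine h.congr_deriv ?_
    push_cast [Pi.mul_apply]
    first
    | ring1
    | (field_simp [hq12, hq21, h1, h2]; ring)
  have hTq2 : HasDerivAt (fun x : ℝ => q1 ^ 4 * (x - q1 / 7) * p1 ^ 2 / (q1 - x) + x ^ 4 * (q1 - x / 7) * p2 ^ 2 / (x - q1))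
      (((6/7 : ℝ)*q1^5*p1^2 - 4*q1^2*q2^3*p2^2 + (26/7 : ℝ)*q1*q2^4*p2^2 + (-4/7 : ℝ)*q2^5*p2^2) / ((q1 - q2)^2)) q2 := by
    have h := ((((((hasDerivAt_id' (x := q2)).sub_const (q1/7)).const_mul (q1^4)).mul_const (p1^2)).div ((hasDerivAt_id' (x := q2)).const_sub q1) hq12).add ((((hasDerivAt_pow 4 q2).mul (((hasDerivAt_id' (x := q2)).div_const 7).const_sub q1)).mul_const (p2^2)).div ((hasDerivAt_id' (x := q2)).sub_const q1) hq21))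
    refine h.congr_deriv ?_
    push_cast [Pi.mul_apply]
    first
    | ring1
    | (field_simp [hq12, hq21, h1, h2]; ring)
  have hTp1 : HasDerivAt (fun x : ℝ => q1 ^ 4 * (q2 - q1 / 7) * x ^ 2 / (q1 - q2) + q2 ^ 4 * (q1 - q2 / 7) * p2 ^ 2 / (q2 - q1))
      (((-2/7 : ℝ)*q1^6*p1 + (16/7 : ℝ)*q1^5*q2*p1 - 2*q1^4*q2^2*p1) / ((q1 - q2)^2)) p1 := by
    have h := ((((hasDerivAt_pow 2 p1).const_mul (q1^4*(q2 - q1/7))).div_const (q1 - q2)).add_const (q2^4*(q1 - q2/7)*p2^2/(q2 - q1)))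
    refine h.congr_deriv ?_
    push_cast
    first
    | ring1
    | (field_simp [hq12, hq21, h1, h2]; ring)
  have hTp2 : HasDerivAt (fun x : ℝ => q1 ^ 4 * (q2 - q1 / 7) * p1 ^ 2 / (q1 - q2) + q2 ^ 4 * (q1 - q2 / 7) * x ^ 2 / (q2 - q1))
      ((-2*q1^2*q2^4*p2 + (16/7 : ℝ)*q1*q2^5*p2 + (-2/7 : ℝ)*q2^6*p2) / ((q1 - q2)^2)) p2 := by
    have h := ((((hasDerivAt_pow 2 p2).const_mul (q2^4*(q1 - q2/7))).div_const (q2 - q1)).const_add (q1^4*(q2 - q1/7)*p1^2/(q1 - q2)))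
    refine h.congr_deriv ?_
    push_cast
    first
    | ring1
    | (field_simp [hq12, hq21, h1, h2]; ring)
  have hKq1 : HasDerivAt (fun x : ℝ => (x^2*p1 - q2^2*p2) * (x^2*(x - 3*q2)*p1 + q2^2*(3*x - q2)*p2) * (x^2*(3*x^3 - 27*x^2*q2 + 33*x*q2^2 - q2^3)*p1 + q2^2*(x^3 - 33*x^2*q2 + 27*x*q2^2 - 3*q2^3)*p2) / (x*q2*(x - q2)^3))
      ((18*q1^13*q2*p1^3 - 243*q1^12*q2^2*p1^3 + 1176*q1^11*q2^3*p1^3 + 28*q1^11*q2^3*p1^2*p2 - 2793*q1^10*q2^4*p1^3 - 357*q1^10*q2^4*p1^2*p2 + 3546*q1^9*q2^5*p1^3 + 1410*q1^9*q2^5*p1^2*p2 - 14*q1^9*q2^5*p1*p2^2 - 2325*q1^8*q2^6*p1^3 - 2571*q1^8*q2^6*p1^2*p2 + 83*q1^8*q2^6*p1*p2^2 + 636*q1^7*q2^7*p1^3 + 2280*q1^7*q2^7*p1^2*p2 - 204*q1^7*q2^7*p1*p2^2 - 15*q1^6*q2^8*p1^3 - 891*q1^6*q2^8*p1^2*p2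 + 545*q1^6*q2^8*p1*p2^2 - 91*q1^6*q2^8*p2^3 + 122*q1^5*q2^9*p1^2*p2 - 894*q1^5*q2^9*p1*p2^2 + 210*q1^5*q2^9*p2^3 - 21*q1^4*q2^10*p1^2*p2 + 645*q1^4*q2^10*p1*p2^2 - 141*q1^4*q2^10*p2^3 - 168*q1^3*q2^11*p1*p2^2 + 28*q1^3*q2^11*p2^3 + 7*q1^2*q2^12*p1*p2^2 - 21*q1^2*q2^12*p2^3 + 18*q1*q2^13*p2^3 - 3*q2^14*p2^3) / (q1^2*q2^2*(q1 - q2)^6)) q1 := by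
    have h := ((((((hasDerivAt_pow 2 q1).mul_const p1).sub_const (q2^2*p2)).mul ((((hasDerivAt_pow 2 q1).mul ((hasDerivAt_id' (x := q1)).sub_const (3*q2))).mul_const p1).add (((((hasDerivAt_id' (x := q1)).const_mul 3).sub_const q2).const_mul (q2^2)).mul_const p2))).mul ((((hasDerivAt_pow 2 q1).mul (((((hasDerivAt_pow 3 q1).const_mul 3).sub (((hasDerivAt_pow 2 q1).const_mul 27).mul_const q2)).add (((hasDerivAt_id' (x := q1)).const_mul 33).mul_const (q2^2))).sub_const (q2^3))).mul_const p1).add ((((((hasDerivAt_pow 3 q1).sub (((hasDerivAt_pow 2 q1).const_mul 33).mul_const q2)).add (((hasDerivAt_id' (x := q1)).const_mul 27).mul_const (q2^2))).sub_const (3*q2^3)).const_mul (q2^2)).mul_const p2))).div (((hasDerivAt_id' (x := q1)).mul_const q2).mul (((hasDerivAt_id' (x := q1)).sub_const q2).pow 3)) hKden)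
    refine h.congr_deriv ?_
    push_cast [Pi.mul_apply, Pi.pow_apply, Pi.add_apply, Pi.sub_apply]
    first
    | ring1
    | (field_simp [hq12, hq21, h1, h2]; ring)
  have hKq2 : HasDerivAt (fun x : ℝ => (q1^2*p1 - x^2*p2) * (q1^2*(q1 - 3*x)*p1 + x^2*(3*q1 - x)*p2) * (q1^2*(3*q1^3 - 27*q1^2*x + 33*q1*x^2 - x^3)*p1 + x^2*(q1^3 - 33*q1^2*x + 27*q1*x^2 - 3*x^3)*p2) / (q1*x*(q1 - x)^3))
      ((-3*q1^14*p1^3 + 18*q1^13*q2*p1^3 - 21*q1^12*q2^2*p1^3 + 7*q1^12*q2^2*p1^2*p2 + 28*q1^11*q2^3*p1^3 - 168*q1^11*q2^3*p1^2*p2 - 141*q1^10*q2^4*p1^3 + 645*q1^10*q2^4*p1^2*p2 - 21*q1^10*q2^4*p1*p2^2 + 210*q1^9*q2^5*p1^3 - 894*q1^9*q2^5*p1^2*p2 + 122*q1^9*q2^5*p1*p2^2 - 91*q1^8*q2^6*p1^3 + 545*q1^8*q2^6*p1^2*p2 - 891*q1^8*q2^6*p1*p2^2 - 15*q1^8*q2^6*p2^3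 - 204*q1^7*q2^7*p1^2*p2 + 2280*q1^7*q2^7*p1*p2^2 + 636*q1^7*q2^7*p2^3 + 83*q1^6*q2^8*p1^2*p2 - 2571*q1^6*q2^8*p1*p2^2 - 2325*q1^6*q2^8*p2^3 - 14*q1^5*q2^9*p1^2*p2 + 1410*q1^5*q2^9*p1*p2^2 + 3546*q1^5*q2^9*p2^3 - 357*q1^4*q2^10*p1*p2^2 - 2793*q1^4*q2^10*p2^3 + 28*q1^3*q2^11*p1*p2^2 + 1176*q1^3*q2^11*p2^3 - 243*q1^2*q2^12*p2^3 + 18*q1*q2^13*p2^3) / (q1^2*q2^2*(q1 - q2)^6)) q2 := by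
    have h := (((((((hasDerivAt_pow 2 q2).mul_const p2).const_sub (q1^2*p1))).mul ((((((hasDerivAt_id' (x := q2)).const_mul 3).const_sub q1).const_mul (q1^2)).mul_const p1).add (((hasDerivAt_pow 2 q2).mul ((hasDerivAt_id' (x := q2)).const_sub (3*q1))).mul_const p2))).mul ((((((((hasDerivAt_id' (x := q2)).const_mul (27*q1^2)).const_sub (3*q1^3)).add ((hasDerivAt_pow 2 q2).const_mul (33*q1))).sub (hasDerivAt_pow 3 q2)).const_mul (q1^2)).mul_const p1).add (((hasDerivAt_pow 2 q2).mul (((((hasDerivAt_id' (x := q2)).const_mul (33*q1^2)).const_sub (q1^3)).add ((hasDerivAt_pow 2 q2).const_mul (27*q1))).sub ((hasDerivAt_pow 3 q2).const_mul 3))).mul_const p2))).div (((hasDerivAt_id' (x := q2)).const_mul q1).mul (((hasDerivAt_id' (x := q2)).const_sub q1).pow 3)) hKden)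
    refine h.congr_deriv ?_
    push_cast [Pi.mul_apply, Pi.pow_apply, Pi.add_apply, Pi.sub_apply]
    first
    | ring1
    | (field_simp [hq12, hq21, h1, h2]; ring)
  have hKp1 : HasDerivAt (fun x : ℝ => (q1^2*x - q2^2*p2) * (q1^2*(q1 - 3*q2)*x + q2^2*(3*q1 - q2)*p2) * (q1^2*(3*q1^3 - 27*q1^2*q2 + 33*q1*q2^2 - q2^3)*x + q2^2*(q1^3 - 33*q1^2*q2 + 27*q1*q2^2 - 3*q2^3)*p2) / (q1*q2*(q1 - q2)^3))
      ((9*q1^14*q2*p1^2 - 135*q1^13*q2^2*p1^2 + 693*q1^12*q2^3*p1^2 + 14*q1^12*q2^3*p1*p2 - 1659*q1^11*q2^4*p1^2 - 210*q1^11*q2^4*p1*p2 + 2043*q1^10*q2^5*p1^2 + 822*q1^10*q2^5*p1*p2 - 7*q1^10*q2^5*p2^2 - 1269*q1^9*q2^6*p1^2 - 1386*q1^9*q2^6*p1*p2 + 41*q1^9*q2^6*p2^2 + 327*q1^8*q2^7*p1^2 + 1130*q1^8*q2^7*p1*p2 - 219*q1^8*q2^7*p2^2 - 9*q1^7*q2^8*p1^2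 - 438*q1^7*q2^8*p1*p2 + 565*q1^7*q2^8*p2^2 + 82*q1^6*q2^9*p1*p2 - 693*q1^6*q2^9*p2^2 - 14*q1^5*q2^10*p1*p2 + 411*q1^5*q2^10*p2^2 - 105*q1^4*q2^11*p2^2 + 7*q1^3*q2^12*p2^2) / (q1^2*q2^2*(q1 - q2)^6)) p1 := by
    have h := ((((((hasDerivAt_id' (x := p1)).const_mul (q1^2)).sub_const (q2^2*p2)).mul (((hasDerivAt_id' (x := p1)).const_mul (q1^2*(q1 - 3*q2))).add_const (q2^2*(3*q1 - q2)*p2))).mul (((hasDerivAt_id' (x := p1)).const_mul (q1^2*(3*q1^3 - 27*q1^2*q2 + 33*q1*q2^2 - q2^3))).add_const (q2^2*(q1^3 - 33*q1^2*q2 + 27*q1*q2^2 - 3*q2^3)*p2))).div_const (q1*q2*(q1 - q2)^3))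
    refine h.congr_deriv ?_
    push_cast [Pi.mul_apply]
    first
    | ring1
    | (field_simp [hq12, hq21, h1, h2]; ring)
  have hKp2 : HasDerivAt (fun x : ℝ => (q1^2*p1 - q2^2*x) * (q1^2*(q1 - 3*q2)*p1 + q2^2*(3*q1 - q2)*x) * (q1^2*(3*q1^3 - 27*q1^2*q2 + 33*q1*q2^2 - q2^3)*p1 + q2^2*(q1^3 - 33*q1^2*q2 + 27*q1*q2^2 - 3*q2^3)*x) / (q1*q2*(q1 - q2)^3))
      ((7*q1^12*q2^3*p1^2 - 105*q1^11*q2^4*p1^2 + 411*q1^10*q2^5*p1^2 - 14*q1^10*q2^5*p1*p2 - 693*q1^9*q2^6*p1^2 + 82*q1^9*q2^6*p1*p2 + 565*q1^8*q2^7*p1^2 - 438*q1^8*q2^7*p1*p2 - 9*q1^8*q2^7*p2^2 - 219*q1^7*q2^8*p1^2 + 1130*q1^7*q2^8*p1*p2 + 327*q1^7*q2^8*p2^2 + 41*q1^6*q2^9*p1^2 - 1386*q1^6*q2^9*p1*p2 - 1269*q1^6*q2^9*p2^2 - 7*q1^5*q2^10*p1^2 + 822*q1^5*q2^10*p1*p2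 + 2043*q1^5*q2^10*p2^2 - 210*q1^4*q2^11*p1*p2 - 1659*q1^4*q2^11*p2^2 + 14*q1^3*q2^12*p1*p2 + 693*q1^3*q2^12*p2^2 - 135*q1^2*q2^13*p2^2 + 9*q1*q2^14*p2^2) / (q1^2*q2^2*(q1 - q2)^6)) p2 := by
    have h := ((((((hasDerivAt_id' (x := p2)).const_mul (q2^2)).const_sub (q1^2*p1)).mul (((hasDerivAt_id' (x := p2)).const_mul (q2^2*(3*q1 - q2))).const_add (q1^2*(q1 - 3*q2)*p1))).mul (((hasDerivAt_id' (x := p2)).const_mul (q2^2*(q1^3 - 33*q1^2*q2 + 27*q1*q2^2 - 3*q2^3))).const_add (q1^2*(3*q1^3 - 27*q1^2*q2 + 33*q1*q2^2 - q2^3)*p1))).div_const (q1*q2*(q1 - q2)^3))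
    refine h.congr_deriv ?_
    push_cast [Pi.mul_apply]
    first
    | ring1
    | (field_simp [hq12, hq21, h1, h2]; ring)
  simp only [pb, T, K]
  rw [hTq1.deriv, hTq2.deriv, hTp1.deriv, hTp2.deriv, hKq1.deriv, hKq2.deriv, hKp1.deriv, hKp2.deriv]
  field_simp [hq12, hq21, h1, h2]
  ring
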